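/- Let T be a family of subsets of an ordinal θ, and suppose |T| ≤ δ. Then the set σ = { β < θ : ∃ t, t' ∈ T such that t ∩ β = t' ∩ β and β belongs to exactly one of t, t' } of branching points of T has cardinality at most δ. -/

import Mathlib

open Cardinal

/-!
A pair `(t, t')` witnesses at most one branching point: if `t` and `t'` agree below `β` and
differ at `β`, then `β` is the least element of their symmetric difference. Hence choosing a
witnessing pair for each branching point is injective, and there are at most `|T|² ≤ δ` of them.
-/

section BranchingPoints

variable {α : Type*} [LinearOrder α]

def IsBranchingPoint (T : Set (Set α)) (β : α) : Prop :=
  ∃ t ∈ T, ∃ t' ∈ T, t ∩ Set.Iio β = t' ∩ Set.Iio β ∧ (β ∈ t ↔ β ∉ t')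

theorem mem_iff_mem_of_inter_Iio_eq {t t' : Set α} {β γ : α}
    (h : t ∩ Set.Iio γ = t' ∩ Set.Iio γ) (hβγ : β < γ) : β ∈ t ↔ β ∈ t' := by
  simpa [hβγ] using congrArg (β ∈ ·) h

theorem eq_of_inter_Iio_eq_of_mem_iff_not_mem {t t' : Set α} {β γ : α}
    (hβ : t ∩ Set.Iio β = t' ∩ Set.Iio β) (hβt : β ∈ t ↔ β ∉ t')
    (hγ : t ∩ Set.Iio γ = t' ∩ Set.Iio γ) (hγt : γ ∈ t ↔ γ ∉ t') : β = γ := by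
  rcases lt_trichotomy β γ with hlt | heq | hgt
  · have := mem_iff_mem_of_inter_Iio_eq hγ hlt
    tauto
  · exact heq
  · have := mem_iff_mem_of_inter_Iio_eq hβ hgt
    tauto

theorem mk_setOf_isBranchingPoint_le (T : Set (Set α)) :
    #{β | IsBranchingPoint T β} ≤ #T * #T := by
  choose t ht t' ht' hagree hsplit using fun β : {β | IsBranchingPoint T β} => β.2
  let pair : {β | IsBranchingPoint T β} → T × T := fun β => (⟨t β, ht β⟩, ⟨t' β, ht' β⟩)
  have hpair : Function.Injective pair := by
    intro β γ h
    simp only [pair, Prod.mk.injEq, Subtype.mk.injEq] at h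
    obtain ⟨h₁, h₂⟩ := h
    refine Subtype.ext (eq_of_inter_Iio_eq_of_mem_iff_not_mem (hagree β) (hsplit β) ?_ ?_)
    · rw [h₁, h₂]; exact hagree γ
    · rw [h₁, h₂]; exact hsplit γ
  exact (mk_le_of_injective hpair).trans_eq (mul_def _ _).symm

end BranchingPoints

theorem stmt_3_general (θ : Ordinal) (δ : Cardinal) (hδ : ℵ₀ ≤ δ)
    (T : Set (Set Ordinal))
    (hTcard : #T ≤ δ) :
    #({β | β < θ ∧ ∃ t ∈ T, ∃ t' ∈ T,
        t ∩ Set.Iio β = t' ∩ Set.Iio β ∧ (β ∈ t ↔ β ∉ t')} : Set Ordinal) ≤ δ :=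
  calc _ ≤ #{β | IsBranchingPoint T β} := mk_le_mk_of_subset fun _ hβ => hβ.2
    _ ≤ #T * #T := mk_setOf_isBranchingPoint_le T
    _ ≤ δ * δ := mul_le_mul' hTcard hTcard
    _ = δ := mul_eq_self hδ

/-- a family of at most δ many subsets of an ordinal has at most
δ many branching points. -/
theorem stmt_3 (θ : Ordinal) (δ : Cardinal) (hδ : ℵ₀ ≤ δ)
    (T : Set (Set Ordinal)) (hTsub : ∀ t ∈ T, t ⊆ Set.Iio θ)
    (hTcard : #T ≤ δ) :
    #({β | β < θ ∧ ∃ t ∈ T, ∃ t' ∈ T,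
        t ∩ Set.Iio β = t' ∩ Set.Iio β ∧ (β ∈ t ↔ β ∉ t')} : Set Ordinal) ≤ δ :=
  stmt_3_general θ δ hδ T hTcard
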